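/- arXiv:2411.01731 — 5 statements merged into one kernel-verified Lean document; each statement's English description precedes it below -/
import Mathlib

section
/- Let b : R^d → R^d satisfy |b(x) − b(y)| ≤ L₀(1 + |x|^ℓ + |y|^ℓ)|x − y| for all x, y. Then the tamed drift b^(δ)(x) = b(x)/(1 + δ^γ |x|^ℓ) satisfies |b^(δ)(x) − b(x)| ≤ 3 max(L₀, |b(0)|)(1 + |x|^{1+2ℓ}) δ^γ for all x ∈ R^d and δ ∈ (0,1]. -/
/-
Writing `c = δ^γ ‖x‖^ℓ`, the taming error is `(1 - 1/(1 + c)) ‖b x‖ ≤ c ‖b x‖`.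
Comparing with `b 0`, the growth condition gives `‖b x‖ ≤ M (1 + (2 + ‖x‖^ℓ) ‖x‖)`
with `M = max L₀ ‖b 0‖`. The remaining scalar inequality
`r^ℓ (1 + (2 + r^ℓ) r) ≤ 3 (1 + r^(1+2ℓ))` follows from `r^ℓ ≤ 1` for `r ≤ 1`
and `r^ℓ ≥ 1` for `r ≥ 1`.
-/

open Real

lemma norm_inv_one_add_smul_sub_self_le {E : Type*} [SeminormedAddCommGroup E] [NormedSpace ℝ E]
    {c : ℝ} (hc : 0 ≤ c) (v : E) : ‖(1 + c)⁻¹ • v - v‖ ≤ c * ‖v‖ := by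
  have hfactor : 1 - (1 + c)⁻¹ = c / (1 + c) := by field_simp; ring
  calc ‖(1 + c)⁻¹ • v - v‖ = ‖(1 - (1 + c)⁻¹) • v‖ := by
        rw [← norm_neg, neg_sub, sub_smul, one_smul]
    _ = (1 - (1 + c)⁻¹) * ‖v‖ := by
        rw [norm_smul, Real.norm_of_nonneg (by rw [hfactor]; positivity)]
    _ ≤ c * ‖v‖ := by
        rw [hfactor]
        gcongr
        exact div_le_self hc (by linarith)

lemma norm_le_of_norm_sub_le_rpow_growth {E F : Type*} [SeminormedAddCommGroup E]
    [SeminormedAddCommGroup F] {L₀ ℓ : ℝ} {b : E → F}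
    (hb : ∀ x y, ‖b x - b y‖ ≤ L₀ * (1 + ‖x‖ ^ ℓ + ‖y‖ ^ ℓ) * ‖x - y‖) (x : E) :
    ‖b x‖ ≤ max L₀ ‖b 0‖ * (1 + (2 + ‖x‖ ^ ℓ) * ‖x‖) := by
  have hgrowth := hb x 0
  rw [sub_zero, norm_zero] at hgrowth
  have hzero : (0 : ℝ) ^ ℓ ≤ 1 := zero_rpow_le_one ℓ
  have hL : L₀ ≤ max L₀ ‖b 0‖ := le_max_left _ _
  have hb0 : ‖b 0‖ ≤ max L₀ ‖b 0‖ := le_max_right _ _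
  have hM : 0 ≤ max L₀ ‖b 0‖ := (norm_nonneg _).trans hb0
  calc ‖b x‖ ≤ ‖b x - b 0‖ + ‖b 0‖ := norm_le_norm_sub_add _ _
    _ ≤ max L₀ ‖b 0‖ * ((1 + ‖x‖ ^ ℓ + (0 : ℝ) ^ ℓ) * ‖x‖) + max L₀ ‖b 0‖ := by
        rw [← mul_assoc]
        gcongr
        exact hgrowth.trans (by gcongr)
    _ ≤ max L₀ ‖b 0‖ * (1 + (2 + ‖x‖ ^ ℓ) * ‖x‖) := by
        nlinarith [mul_le_mul_of_nonneg_right hzero (norm_nonneg x)]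

lemma rpow_mul_one_add_two_add_rpow_mul_le {ℓ r : ℝ} (hℓ : 0 ≤ ℓ) (hr : 0 ≤ r) :
    r ^ ℓ * (1 + (2 + r ^ ℓ) * r) ≤ 3 * (1 + r ^ (1 + 2 * ℓ)) := by
  have hsplit : r ^ (1 + 2 * ℓ) = r * (r ^ ℓ) ^ 2 := by
    rw [rpow_add' hr (by linarith), rpow_one, mul_comm 2 ℓ, rpow_mul hr, rpow_two]
  rw [hsplit]
  have hs : 0 ≤ r ^ ℓ := rpow_nonneg hr ℓ
  rcases le_total r 1 with hr1 | hr1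
  · have hs1 : r ^ ℓ ≤ 1 := rpow_le_one hr hr1 hℓ
    nlinarith [mul_nonneg hs hr, mul_nonneg (mul_nonneg hs hs) hr]
  · have hs1 : 1 ≤ r ^ ℓ := one_le_rpow hr1 hℓ
    nlinarith [mul_nonneg (by nlinarith : 0 ≤ 2 * r * r ^ ℓ - 1) (sub_nonneg.2 hs1)]

theorem stmt_2_general (d : ℕ) (L₀ ℓ γ : ℝ) (hℓ : 0 ≤ ℓ)
    (b : EuclideanSpace ℝ (Fin d) → EuclideanSpace ℝ (Fin d))
    (hb : ∀ x y, ‖b x - b y‖ ≤ L₀ * (1 + ‖x‖ ^ ℓ + ‖y‖ ^ ℓ) * ‖x - y‖)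
    (δ : ℝ) (hδ : δ ∈ Set.Ioc (0 : ℝ) 1) (x : EuclideanSpace ℝ (Fin d)) :
    ‖(1 + δ ^ γ * ‖x‖ ^ ℓ)⁻¹ • b x - b x‖
      ≤ 3 * max L₀ ‖b 0‖ * (1 + ‖x‖ ^ (1 + 2 * ℓ)) * δ ^ γ := by
  have hδγ : 0 ≤ δ ^ γ := rpow_nonneg hδ.1.le γ
  have hM : 0 ≤ max L₀ ‖b 0‖ := (norm_nonneg _).trans (le_max_right _ _)
  calc ‖(1 + δ ^ γ * ‖x‖ ^ ℓ)⁻¹ • b x - b x‖ ≤ δ ^ γ * ‖x‖ ^ ℓ * ‖b x‖ :=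
        norm_inv_one_add_smul_sub_self_le (by positivity) _
    _ ≤ δ ^ γ * ‖x‖ ^ ℓ * (max L₀ ‖b 0‖ * (1 + (2 + ‖x‖ ^ ℓ) * ‖x‖)) := by
        gcongr
        exact norm_le_of_norm_sub_le_rpow_growth hb x
    _ = δ ^ γ * max L₀ ‖b 0‖ * (‖x‖ ^ ℓ * (1 + (2 + ‖x‖ ^ ℓ) * ‖x‖)) := by ring
    _ ≤ δ ^ γ * max L₀ ‖b 0‖ * (3 * (1 + ‖x‖ ^ (1 + 2 * ℓ))) :=
        mul_le_mul_of_nonneg_left (rpow_mul_one_add_two_add_rpow_mul_le hℓ (norm_nonneg x))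
          (mul_nonneg hδγ hM)
    _ = 3 * max L₀ ‖b 0‖ * (1 + ‖x‖ ^ (1 + 2 * ℓ)) * δ ^ γ := by ring

/-- Taming error bound for the tamed drift `b^(δ)(x) = b(x)/(1 + δ^γ |x|^ℓ)`. -/
theorem stmt_2 (d : ℕ) (L₀ ℓ γ : ℝ) (hL : 0 < L₀) (hℓ : 0 ≤ ℓ)
    (hγ : γ ∈ Set.Ioo (0 : ℝ) (1 / 2))
    (b : EuclideanSpace ℝ (Fin d) → EuclideanSpace ℝ (Fin d))
    (hb : ∀ x y, ‖b x - b y‖ ≤ L₀ * (1 + ‖x‖ ^ ℓ + ‖y‖ ^ ℓ) * ‖x - y‖)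
    (δ : ℝ) (hδ : δ ∈ Set.Ioc (0 : ℝ) 1) (x : EuclideanSpace ℝ (Fin d)) :
    ‖(1 + δ ^ γ * ‖x‖ ^ ℓ)⁻¹ • b x - b x‖
      ≤ 3 * max L₀ ‖b 0‖ * (1 + ‖x‖ ^ (1 + 2 * ℓ)) * δ ^ γ :=
  stmt_2_general d L₀ ℓ γ hℓ b hb δ hδ x
end

section
/- Let b : R^d → R^d satisfy |b(x) − b(y)| ≤ L₀(1 + |x|^ℓ + |y|^ℓ)|x − y| for all x, y. Then the drift b̄^(δ)(x) = b(x)/(1 + δ|x|^{2ℓ})^{1/2} satisfies |b̄^(δ)(x) − b(x)| ≤ 2 max(L₀, |b(0)|)(1 + |x|^{1+3ℓ}) δ for all x ∈ R^d and δ ∈ (0,1]. -/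
/-!
Write `s = √(1 + δ|x|^{2ℓ}) ≥ 1`. Then `|b̄^(δ)(x) - b(x)| = (1 - s⁻¹)|b(x)| ≤ (s - 1)|b(x)| ≤ δ|x|^{2ℓ}|b(x)|/2`.
Comparing with `b(0)`, the local Lipschitz bound gives the growth bound
`|b(x)| ≤ max(L₀, |b(0)|)(1 + 2|x| + |x|^{1+ℓ})`, and `|x|^{2ℓ}(1 + 2|x| + |x|^{1+ℓ}) ≤ 4(1 + |x|^{1+3ℓ})`
by splitting at `|x| = 1`.
-/

open Real

lemma one_sub_inv_sqrt_one_add_le {a : ℝ} (ha : 0 ≤ a) : 1 - (√(1 + a))⁻¹ ≤ a / 2 := by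
  have hs : 1 ≤ √(1 + a) := one_le_sqrt.mpr (by linarith)
  have hs_le : √(1 + a) ≤ 1 + a / 2 := (sqrt_le_left (by linarith)).mpr (by nlinarith)
  have h_inv : 1 - (√(1 + a))⁻¹ ≤ √(1 + a) - 1 := by
    have := inv_mul_cancel₀ (zero_lt_one.trans_le hs).ne'
    nlinarith [inv_nonneg.mpr (zero_le_one.trans hs)]
  linarith

lemma norm_inv_sqrt_one_add_smul_sub_le {E : Type*} [SeminormedAddCommGroup E] [NormedSpace ℝ E]
    {a : ℝ} (ha : 0 ≤ a) (v : E) : ‖(√(1 + a))⁻¹ • v - v‖ ≤ a / 2 * ‖v‖ := by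
  have h_inv_le : (√(1 + a))⁻¹ ≤ 1 := inv_le_one_of_one_le₀ (one_le_sqrt.mpr (by linarith))
  rw [show (√(1 + a))⁻¹ • v - v = ((√(1 + a))⁻¹ - 1) • v by rw [sub_smul, one_smul],
    norm_smul, norm_of_nonpos (by linarith), neg_sub]
  gcongr
  exact one_sub_inv_sqrt_one_add_le ha

lemma norm_le_of_norm_sub_le_rpow {E F : Type*} [SeminormedAddCommGroup E]
    [SeminormedAddCommGroup F] {L₀ ℓ : ℝ} (hℓ : 0 ≤ ℓ) {b : E → F}
    (hb : ∀ x y, ‖b x - b y‖ ≤ L₀ * (1 + ‖x‖ ^ ℓ + ‖y‖ ^ ℓ) * ‖x - y‖) (x : E) :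
    ‖b x‖ ≤ max L₀ ‖b 0‖ * (1 + 2 * ‖x‖ + ‖x‖ ^ (1 + ℓ)) := by
  set r := ‖x‖
  have hr : 0 ≤ r := norm_nonneg x
  have h_rpow : r ^ (1 + ℓ) = r ^ ℓ * r := by
    rw [add_comm, rpow_add_one' hr (by linarith)]
  have h_lip : ‖b x - b 0‖ ≤ L₀ * ((1 + r ^ ℓ + 0 ^ ℓ) * r) := by
    simpa [mul_assoc] using hb x 0
  have h_factor : (1 + r ^ ℓ + (0 : ℝ) ^ ℓ) * r ≤ 2 * r + r ^ (1 + ℓ) := by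
    nlinarith [zero_rpow_le_one ℓ]
  calc ‖b x‖ ≤ ‖b 0‖ + ‖b x - b 0‖ := norm_le_insert' _ _
    _ ≤ ‖b 0‖ + max L₀ ‖b 0‖ * ((1 + r ^ ℓ + 0 ^ ℓ) * r) := by
        gcongr
        exact h_lip.trans (mul_le_mul_of_nonneg_right (le_max_left _ _) (by positivity))
    _ ≤ max L₀ ‖b 0‖ + max L₀ ‖b 0‖ * (2 * r + r ^ (1 + ℓ)) := by
        gcongr
        exact le_max_right _ _
    _ = max L₀ ‖b 0‖ * (1 + 2 * r + r ^ (1 + ℓ)) := by ring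

lemma rpow_two_mul_mul_le {r ℓ : ℝ} (hr : 0 ≤ r) (hℓ : 0 ≤ ℓ) :
    r ^ (2 * ℓ) * (1 + 2 * r + r ^ (1 + ℓ)) ≤ 4 * (1 + r ^ (1 + 3 * ℓ)) := by
  have h_top : 0 ≤ r ^ (1 + 3 * ℓ) := rpow_nonneg hr _
  rcases le_total r 1 with h | h
  · have h₁ : r ^ (2 * ℓ) ≤ 1 := rpow_le_one hr h (by linarith)
    have h₂ : r ^ (1 + ℓ) ≤ 1 := rpow_le_one hr h (by linarith)
    nlinarith [rpow_nonneg hr (2 * ℓ), rpow_nonneg hr (1 + ℓ)]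
  · have hr₀ : 0 < r := zero_lt_one.trans_le h
    have h₁ : r ^ (2 * ℓ) ≤ r ^ (1 + 3 * ℓ) := rpow_le_rpow_of_exponent_le h (by linarith)
    have h₂ : r ^ (2 * ℓ) * r ≤ r ^ (1 + 3 * ℓ) := by
      rw [← rpow_add_one hr₀.ne']
      exact rpow_le_rpow_of_exponent_le h (by linarith)
    have h₃ : r ^ (2 * ℓ) * r ^ (1 + ℓ) = r ^ (1 + 3 * ℓ) := by
      rw [← rpow_add hr₀]
      ring_nf
    nlinarith

theorem stmt_3_general (d : ℕ) (L₀ ℓ : ℝ) (hℓ : 0 ≤ ℓ)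
    (b : EuclideanSpace ℝ (Fin d) → EuclideanSpace ℝ (Fin d))
    (hb : ∀ x y, ‖b x - b y‖ ≤ L₀ * (1 + ‖x‖ ^ ℓ + ‖y‖ ^ ℓ) * ‖x - y‖)
    (δ : ℝ) (hδ : δ ∈ Set.Ioc (0 : ℝ) 1) (x : EuclideanSpace ℝ (Fin d)) :
    ‖(Real.sqrt (1 + δ * ‖x‖ ^ (2 * ℓ)))⁻¹ • b x - b x‖
      ≤ 2 * max L₀ ‖b 0‖ * (1 + ‖x‖ ^ (1 + 3 * ℓ)) * δ := by
  have hδ₀ : 0 ≤ δ := hδ.1.le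
  calc _ ≤ δ * ‖x‖ ^ (2 * ℓ) / 2 * ‖b x‖ :=
        norm_inv_sqrt_one_add_smul_sub_le (by positivity) _
    _ ≤ δ * ‖x‖ ^ (2 * ℓ) / 2 * (max L₀ ‖b 0‖ * (1 + 2 * ‖x‖ + ‖x‖ ^ (1 + ℓ))) := by
        gcongr
        exact norm_le_of_norm_sub_le_rpow hℓ hb x
    _ = δ * max L₀ ‖b 0‖ / 2 * (‖x‖ ^ (2 * ℓ) * (1 + 2 * ‖x‖ + ‖x‖ ^ (1 + ℓ))) := by ring
    _ ≤ δ * max L₀ ‖b 0‖ / 2 * (4 * (1 + ‖x‖ ^ (1 + 3 * ℓ))) := by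
        gcongr ?_ * ?_
        exact rpow_two_mul_mul_le (norm_nonneg x) hℓ
    _ = _ := by ring

/-- Taming error bound for the drift `b̄^(δ)(x) = b(x)/(1 + δ|x|^{2ℓ})^{1/2}`. -/
theorem stmt_3 (d : ℕ) (L₀ ℓ : ℝ) (hL : 0 < L₀) (hℓ : 0 ≤ ℓ)
    (b : EuclideanSpace ℝ (Fin d) → EuclideanSpace ℝ (Fin d))
    (hb : ∀ x y, ‖b x - b y‖ ≤ L₀ * (1 + ‖x‖ ^ ℓ + ‖y‖ ^ ℓ) * ‖x - y‖)
    (δ : ℝ) (hδ : δ ∈ Set.Ioc (0 : ℝ) 1) (x : EuclideanSpace ℝ (Fin d)) :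
    ‖(Real.sqrt (1 + δ * ‖x‖ ^ (2 * ℓ)))⁻¹ • b x - b x‖
      ≤ 2 * max L₀ ‖b 0‖ * (1 + ‖x‖ ^ (1 + 3 * ℓ)) * δ :=
  stmt_3_general d L₀ ℓ hℓ b hb δ hδ x
end

section
/- Let b : R^d → R^d satisfy the one-sided Lipschitz bound ⟨x − y, b(x) − b(y)⟩ ≤ −L₂(1 + |x|^ℓ + |y|^ℓ)|x − y|² whenever |x| > R or |y| > R (with L₂ > 0), and the mixed bound ⟨x − y, b(x)|y|^ℓ − b(y)|x|^ℓ⟩ ≤ (L₃(1 + |x|^ℓ + |y|^ℓ) − L₄|x|^ℓ|y|^ℓ)|x − y|² on the same region. Then for all δ ∈ (0, (L₂/(2L₃))^{1/γ} ∧ 1] and all x, y with |x| > R or |y| > R, the tamed drift b^(δ)(x) = b(x)/(1 + δ^γ|x|^ℓ) satisfies ⟨x − y, b^(δ)(x) − b^(δ)(y)⟩ ≤ −(min(L₂/2, L₄))|x − y|². -/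
/-!
Put `a = δ^γ`, `X = |x|^ℓ`, `Y = |y|^ℓ`. Over the common denominator `(1 + aX)(1 + aY)`, the
tamed difference `b(x)/(1 + aX) - b(y)/(1 + aY)` becomes `(b(x) - b(y)) + a (Y b(x) - X b(y))`,
so the two hypotheses bound its inner product with `x - y` by
`-(L₂ (1 + X + Y) - a (L₃ (1 + X + Y) - L₄ X Y)) |x - y|²`. The smallness `a L₃ ≤ L₂/2` of the
taming parameter keeps half of the dissipation `L₂`, and with `a ≤ 1` this coefficient dominates
`min (L₂/2, L₄) (1 + aX)(1 + aY)`.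
-/

open scoped RealInnerProductSpace

lemma inv_smul_sub_inv_smul_eq {K E : Type*} [Field K] [AddCommGroup E] [Module K E]
    {a X Y : K} (hX : 1 + a * X ≠ 0) (hY : 1 + a * Y ≠ 0) (u v : E) :
    (1 + a * X)⁻¹ • u - (1 + a * Y)⁻¹ • v
      = ((1 + a * X) * (1 + a * Y))⁻¹ • ((u - v) + a • (Y • u - X • v)) := by
  match_scalars
  · field_simp
  · field_simp
    ring

lemma min_mul_one_add_mul_one_add_le {a X Y L₂ L₃ L₄ : ℝ} (hX : 0 ≤ X) (hY : 0 ≤ Y)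
    (ha₀ : 0 ≤ a) (ha₁ : a ≤ 1) (haL₃ : a * L₃ ≤ L₂ / 2) (hL₂ : 0 < L₂) (hL₄ : 0 < L₄) :
    min (L₂ / 2) L₄ * ((1 + a * X) * (1 + a * Y))
      ≤ L₂ * (1 + X + Y) - a * (L₃ * (1 + X + Y) - L₄ * X * Y) := by
  set m := min (L₂ / 2) L₄
  have hm₂ : m ≤ L₂ / 2 := min_le_left _ _
  have hm₄ : m ≤ L₄ := min_le_right _ _
  have hma : m * a ≤ m := mul_le_of_le_one_right (le_min (by linarith) hL₄.le) ha₁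
  have hXY : 0 ≤ X * Y := mul_nonneg hX hY
  have hsum : 0 ≤ 1 + X + Y := by linarith
  have hL₃ : a * L₃ * (1 + X + Y) ≤ L₂ / 2 * (1 + X + Y) :=
    mul_le_mul_of_nonneg_right haL₃ hsum
  have hmaXY : m * a * (a * (X * Y)) ≤ L₄ * (a * (X * Y)) :=
    mul_le_mul_of_nonneg_right (hma.trans hm₄) (mul_nonneg ha₀ hXY)
  have hmaX : m * a * (X + Y) ≤ L₂ / 2 * (X + Y) :=
    mul_le_mul_of_nonneg_right (hma.trans hm₂) (by linarith)
  linarith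

lemma real_inner_inv_smul_sub_inv_smul_le {E : Type*} [NormedAddCommGroup E]
    [InnerProductSpace ℝ E] {a X Y L₂ L₃ L₄ n : ℝ} {w u v : E} (hX : 0 ≤ X) (hY : 0 ≤ Y)
    (ha₀ : 0 ≤ a) (ha₁ : a ≤ 1) (haL₃ : a * L₃ ≤ L₂ / 2) (hL₂ : 0 < L₂) (hL₄ : 0 < L₄)
    (hn : 0 ≤ n) (hdiss : ⟪w, u - v⟫ ≤ -L₂ * (1 + X + Y) * n)
    (hmix : ⟪w, Y • u - X • v⟫ ≤ (L₃ * (1 + X + Y) - L₄ * X * Y) * n) :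
    ⟪w, (1 + a * X)⁻¹ • u - (1 + a * Y)⁻¹ • v⟫ ≤ -min (L₂ / 2) L₄ * n := by
  have hD : 0 < (1 + a * X) * (1 + a * Y) := by positivity
  rw [inv_smul_sub_inv_smul_eq (by positivity) (by positivity), real_inner_smul_right,
    inner_add_right, real_inner_smul_right, inv_mul_le_iff₀ hD]
  have hcoef := mul_le_mul_of_nonneg_right
    (min_mul_one_add_mul_one_add_le hX hY ha₀ ha₁ haL₃ hL₂ hL₄) hn
  linarith [mul_le_mul_of_nonneg_left hmix ha₀]

theorem stmt_5_general (d : ℕ) (ℓ γ R L₂ L₃ L₄ : ℝ)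
    (hγ : γ ∈ Set.Ioo (0 : ℝ) (1 / 2))
    (hL₂ : 0 < L₂) (hL₃ : 0 < L₃) (hL₄ : 0 < L₄)
    (b : EuclideanSpace ℝ (Fin d) → EuclideanSpace ℝ (Fin d))
    (hdiss : ∀ x y : EuclideanSpace ℝ (Fin d), (R < ‖x‖ ∨ R < ‖y‖) →
      ⟪x - y, b x - b y⟫ ≤ -L₂ * (1 + ‖x‖ ^ ℓ + ‖y‖ ^ ℓ) * ‖x - y‖ ^ 2)
    (hmix : ∀ x y : EuclideanSpace ℝ (Fin d), (R < ‖x‖ ∨ R < ‖y‖) →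
      ⟪x - y, ‖y‖ ^ ℓ • b x - ‖x‖ ^ ℓ • b y⟫
        ≤ (L₃ * (1 + ‖x‖ ^ ℓ + ‖y‖ ^ ℓ) - L₄ * ‖x‖ ^ ℓ * ‖y‖ ^ ℓ) * ‖x - y‖ ^ 2)
    (δ : ℝ) (hδ : δ ∈ Set.Ioc (0 : ℝ) (min ((L₂ / (2 * L₃)) ^ (1 / γ)) 1))
    (x y : EuclideanSpace ℝ (Fin d)) (hxy : R < ‖x‖ ∨ R < ‖y‖) :
    ⟪x - y, (1 + δ ^ γ * ‖x‖ ^ ℓ)⁻¹ • b x - (1 + δ ^ γ * ‖y‖ ^ ℓ)⁻¹ • b y⟫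
      ≤ -(min (L₂ / 2) L₄) * ‖x - y‖ ^ 2 := by
  obtain ⟨hγ₀, -⟩ := hγ
  obtain ⟨hδ₀, hδ⟩ := hδ
  have ha₁ : δ ^ γ ≤ 1 := Real.rpow_le_one hδ₀.le (hδ.trans (min_le_right _ _)) hγ₀.le
  have haL₃ : δ ^ γ * L₃ ≤ L₂ / 2 := by
    have h : δ ^ γ ≤ L₂ / (2 * L₃) := by
      rw [← Real.le_rpow_inv_iff_of_pos hδ₀.le (by positivity) hγ₀, ← one_div]
      exact hδ.trans (min_le_left _ _)
    rw [le_div_iff₀ (by positivity)] at h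
    linarith
  exact real_inner_inv_smul_sub_inv_smul_le (by positivity) (by positivity) (by positivity) ha₁
    haL₃ hL₂ hL₄ (by positivity) (hdiss x y hxy) (hmix x y hxy)

/-- Dissipativity of the tamed drift outside a ball. -/
theorem stmt_5 (d : ℕ) (ℓ γ R L₂ L₃ L₄ : ℝ) (hℓ : 0 ≤ ℓ)
    (hγ : γ ∈ Set.Ioo (0 : ℝ) (1 / 2)) (hR : 0 ≤ R)
    (hL₂ : 0 < L₂) (hL₃ : 0 < L₃) (hL₄ : 0 < L₄)
    (b : EuclideanSpace ℝ (Fin d) → EuclideanSpace ℝ (Fin d))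
    (hdiss : ∀ x y : EuclideanSpace ℝ (Fin d), (R < ‖x‖ ∨ R < ‖y‖) →
      ⟪x - y, b x - b y⟫ ≤ -L₂ * (1 + ‖x‖ ^ ℓ + ‖y‖ ^ ℓ) * ‖x - y‖ ^ 2)
    (hmix : ∀ x y : EuclideanSpace ℝ (Fin d), (R < ‖x‖ ∨ R < ‖y‖) →
      ⟪x - y, ‖y‖ ^ ℓ • b x - ‖x‖ ^ ℓ • b y⟫
        ≤ (L₃ * (1 + ‖x‖ ^ ℓ + ‖y‖ ^ ℓ) - L₄ * ‖x‖ ^ ℓ * ‖y‖ ^ ℓ) * ‖x - y‖ ^ 2)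
    (δ : ℝ) (hδ : δ ∈ Set.Ioc (0 : ℝ) (min ((L₂ / (2 * L₃)) ^ (1 / γ)) 1))
    (x y : EuclideanSpace ℝ (Fin d)) (hxy : R < ‖x‖ ∨ R < ‖y‖) :
    ⟪x - y, (1 + δ ^ γ * ‖x‖ ^ ℓ)⁻¹ • b x - (1 + δ ^ γ * ‖y‖ ^ ℓ)⁻¹ • b y⟫
      ≤ -(min (L₂ / 2) L₄) * ‖x - y‖ ^ 2 :=
  stmt_5_general d ℓ γ R L₂ L₃ L₄ hγ hL₂ hL₃ hL₄ b hdiss hmix δ hδ x y hxy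
end

section
/- Let π^(δ)(x) = ((|x| ∧ φ^{-1}(δ^{-γ}))/|x|) x (π^(δ)(0)=0) with φ(r) = 1 + r^ℓ, γ ∈ (0,1/2), ℓ > 0, and α > 0. Then for all x ∈ R^d and δ ∈ (0,1], |π^(δ)(x) − x| ≤ 2^{max(1, α/γ)} (1 + |x|^{1 + ℓα/γ}) δ^α. -/
/-!
Moving `x` onto the sphere of radius `R = φ⁻¹(δ^{-γ})` changes it by `‖x‖ - R ≤ ‖x‖`, and only
when `φ(‖x‖) > δ^{-γ}`, i.e. when `δ^α φ(‖x‖)^{α/γ} ≥ 1`. Hence the displacement is at most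
`‖x‖ φ(‖x‖)^{α/γ} δ^α`, and with `m = max 1 ‖x‖` this is `≤ 2^{α/γ} m^{1 + ℓα/γ} δ^α`.
-/

section

-- Kept local: the notation `π` for `Real.pi` would capture the variable `π` of `stmt_15`.
open Real

theorem norm_min_div_smul_sub_self {E : Type*} [NormedAddCommGroup E] [NormedSpace ℝ E]
    {x : E} (hx : x ≠ 0) (R : ℝ) :
    ‖(min ‖x‖ R / ‖x‖) • x - x‖ = ‖x‖ - min ‖x‖ R := by
  have hxn : 0 < ‖x‖ := norm_pos_iff.mpr hx
  have hle : min ‖x‖ R / ‖x‖ ≤ 1 := (div_le_one hxn).mpr (min_le_left _ _)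
  rw [show (min ‖x‖ R / ‖x‖) • x - x = (min ‖x‖ R / ‖x‖ - 1) • x by rw [sub_smul, one_smul],
    norm_smul, Real.norm_eq_abs, abs_of_nonpos (by linarith), neg_sub,
    sub_mul, one_mul, div_mul_cancel₀ _ hxn.ne']

theorem lt_one_add_rpow_of_rpow_inv_lt {a r ℓ : ℝ} (hℓ : 0 < ℓ) (ha : 1 ≤ a)
    (h : (a - 1) ^ (1 / ℓ) < r) : a < 1 + r ^ ℓ := by
  have hpow := rpow_lt_rpow (rpow_nonneg (sub_nonneg.mpr ha) _) h hℓ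
  rw [one_div, rpow_inv_rpow (sub_nonneg.mpr ha) hℓ.ne'] at hpow
  linarith

theorem one_le_rpow_mul_rpow_div_of_rpow_neg_le {δ γ α b : ℝ} (hδ : 0 < δ) (hγ : 0 < γ)
    (hα : 0 ≤ α) (h : δ ^ (-γ) ≤ b) : 1 ≤ b ^ (α / γ) * δ ^ α := by
  have hneg : δ ^ (-α) ≤ b ^ (α / γ) := by
    calc δ ^ (-α) = (δ ^ (-γ)) ^ (α / γ) := by
          rw [← rpow_mul hδ.le]; congr 1; field_simp
      _ ≤ b ^ (α / γ) := rpow_le_rpow (rpow_nonneg hδ.le _) h (div_nonneg hα hγ.le)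
  calc (1 : ℝ) = δ ^ (-α) * δ ^ α := by rw [← rpow_add hδ]; simp
    _ ≤ b ^ (α / γ) * δ ^ α := by gcongr

/-- `r ↦ min r R` with `R = φ⁻¹(δ^{-γ})`, `φ r = 1 + r ^ ℓ`, is the radial part of `π^(δ)`. -/
theorem sub_min_le_mul_one_add_rpow_mul_rpow {δ γ α ℓ r : ℝ} (hδ0 : 0 < δ) (hδ1 : δ ≤ 1)
    (hγ : 0 < γ) (hα : 0 ≤ α) (hℓ : 0 < ℓ) (hr : 0 ≤ r) :
    r - min r ((δ ^ (-γ) - 1) ^ (1 / ℓ)) ≤ r * ((1 + r ^ ℓ) ^ (α / γ) * δ ^ α) := by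
  have hδγ : 1 ≤ δ ^ (-γ) := one_le_rpow_of_pos_of_le_one_of_nonpos hδ0 hδ1 (by linarith)
  have hR : 0 ≤ (δ ^ (-γ) - 1) ^ (1 / ℓ) := rpow_nonneg (by linarith) _
  rcases le_or_gt r ((δ ^ (-γ) - 1) ^ (1 / ℓ)) with hle | hlt
  · rw [min_eq_left hle, sub_self]
    positivity
  · have hφ := lt_one_add_rpow_of_rpow_inv_lt hℓ hδγ hlt
    calc r - min r ((δ ^ (-γ) - 1) ^ (1 / ℓ)) ≤ r := by linarith [le_min hr hR]
      _ ≤ r * ((1 + r ^ ℓ) ^ (α / γ) * δ ^ α) :=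
        le_mul_of_one_le_right hr (one_le_rpow_mul_rpow_div_of_rpow_neg_le hδ0 hγ hα hφ.le)

theorem mul_one_add_rpow_rpow_le {t ℓ p : ℝ} (ht : 0 ≤ t) (hℓ : 0 ≤ ℓ) (hp : 0 ≤ p) :
    t * (1 + t ^ ℓ) ^ p ≤ 2 ^ p * (1 + t ^ (1 + ℓ * p)) := by
  set m := max 1 t with hm
  have hm1 : 1 ≤ m := le_max_left _ _
  have hm0 : 0 ≤ m := zero_le_one.trans hm1
  have hbase : 1 + t ^ ℓ ≤ 2 * m ^ ℓ := by
    linarith [one_le_rpow hm1 hℓ, rpow_le_rpow ht (le_max_right 1 t) hℓ]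
  have hmpow : m ^ (1 + ℓ * p) ≤ 1 + t ^ (1 + ℓ * p) := by
    rcases max_cases 1 t with ⟨h, -⟩ | ⟨h, -⟩ <;> rw [hm, h]
    · simp [rpow_nonneg ht]
    · linarith
  calc t * (1 + t ^ ℓ) ^ p ≤ m * (2 * m ^ ℓ) ^ p := by
        gcongr
        exact le_max_right 1 t
    _ = 2 ^ p * m ^ (1 + ℓ * p) := by
        rw [mul_rpow zero_le_two (rpow_nonneg hm0 _), ← rpow_mul hm0,
          rpow_add (zero_lt_one.trans_le hm1), rpow_one]
        ring
    _ ≤ 2 ^ p * (1 + t ^ (1 + ℓ * p)) := by gcongr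

end

/-- Closeness of the truncation map `π^(δ)` to the identity. -/
theorem stmt_15 (d : ℕ) (ℓ γ α : ℝ) (hℓ : 0 < ℓ)
    (hγ : γ ∈ Set.Ioo (0 : ℝ) (1 / 2)) (hα : 0 < α)
    (δ : ℝ) (hδ : δ ∈ Set.Ioc (0 : ℝ) 1)
    (π : EuclideanSpace ℝ (Fin d) → EuclideanSpace ℝ (Fin d))
    (hπ0 : π 0 = 0)
    (hπ : ∀ x : EuclideanSpace ℝ (Fin d), x ≠ 0 →
      π x = (min ‖x‖ ((δ ^ (-γ) - 1) ^ (1 / ℓ)) / ‖x‖) • x)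
    (x : EuclideanSpace ℝ (Fin d)) :
    ‖π x - x‖ ≤ 2 ^ max (1 : ℝ) (α / γ) * (1 + ‖x‖ ^ (1 + ℓ * α / γ)) * δ ^ α := by
  obtain ⟨hδ0, hδ1⟩ := hδ
  have hp : 0 ≤ α / γ := div_nonneg hα.le hγ.1.le
  calc ‖π x - x‖ ≤ ‖x‖ * ((1 + ‖x‖ ^ ℓ) ^ (α / γ) * δ ^ α) := by
        rcases eq_or_ne x 0 with rfl | hx
        · simp [hπ0]
        · rw [hπ x hx, norm_min_div_smul_sub_self hx]
          exact sub_min_le_mul_one_add_rpow_mul_rpow hδ0 hδ1 hγ.1 hα.le hℓ (norm_nonneg x)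
    _ = ‖x‖ * (1 + ‖x‖ ^ ℓ) ^ (α / γ) * δ ^ α := by ring
    _ ≤ 2 ^ (α / γ) * (1 + ‖x‖ ^ (1 + ℓ * α / γ)) * δ ^ α := by
        rw [mul_div_assoc ℓ]
        gcongr ?_ * _
        exact mul_one_add_rpow_rpow_le (norm_nonneg x) hℓ.le hp
    _ ≤ 2 ^ max (1 : ℝ) (α / γ) * (1 + ‖x‖ ^ (1 + ℓ * α / γ)) * δ ^ α := by
        gcongr
        · exact one_le_two
        · exact le_max_right _ _
end

section
/- Let L₂, L₀ > 0, ℓ ≥ 0 and δ ∈ (0, L₂²/(32 L₀⁴)]. Then for all x ∈ R^d with |x| ≥ 1: L₂(1 + δ|x|^{2ℓ})^{1/2} − 2L₀²(1 + |x|^ℓ)δ ≥ L₂/√2 + (L₂/(2√2) − 2L₀²√δ)(1 + |x|^ℓ)√δ > 0. -/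
/-!
Write `r = ‖x‖ ^ ℓ ≥ 1` and `s = √δ`. Then `√(1 + s² r²) ≥ (1 + s r) / √2`, and `r ≥ 1` gives
`s r ≥ s (1 + r) / 2`, which yields the lower bound after expanding `δ = s²`. The smallness
condition `32 L₀⁴ δ ≤ L₂²` is exactly `2 L₀² √δ ≤ L₂ / (2√2)`, so the bound is positive.
-/

open Real

theorem Real.sqrt_add_sqrt_le_sqrt_two_mul_sqrt_add {a b : ℝ} (ha : 0 ≤ a) (hb : 0 ≤ b) :
    √a + √b ≤ √2 * √(a + b) := by
  rw [← sqrt_mul zero_le_two]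
  apply le_sqrt_of_sq_le
  nlinarith [sq_nonneg (√a - √b), sq_sqrt ha, sq_sqrt hb]

theorem div_sqrt_two_add_le_mul_sqrt_one_add_mul_sq {L δ r : ℝ} (hL : 0 ≤ L) (hδ : 0 ≤ δ)
    (hr : 1 ≤ r) (c : ℝ) :
    L / √2 + (L / (2 * √2) - c * √δ) * (1 + r) * √δ
      ≤ L * √(1 + δ * r ^ 2) - c * (1 + r) * δ := by
  have hsqrt : 1 + √δ * r ≤ √2 * √(1 + δ * r ^ 2) := by
    have h := sqrt_add_sqrt_le_sqrt_two_mul_sqrt_add zero_le_one (sq_nonneg (√δ * r))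
    rwa [sqrt_one, sqrt_sq (by positivity), mul_pow, sq_sqrt hδ] at h
  have hsr : (1 + r) * √δ / 2 ≤ √δ * r := by nlinarith [sqrt_nonneg δ]
  calc L / √2 + (L / (2 * √2) - c * √δ) * (1 + r) * √δ
      = L / √2 * (1 + (1 + r) * √δ / 2) - c * (1 + r) * √δ ^ 2 := by ring
    _ ≤ L / √2 * (1 + √δ * r) - c * (1 + r) * δ := by
        rw [sq_sqrt hδ]; gcongr
    _ ≤ L / √2 * (√2 * √(1 + δ * r ^ 2)) - c * (1 + r) * δ := by gcongr
    _ = L * √(1 + δ * r ^ 2) - c * (1 + r) * δ := by field_simp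

theorem two_mul_sq_mul_sqrt_le_div {L₂ L₀ δ : ℝ} (hL₂ : 0 ≤ L₂) (hδ : 0 ≤ δ)
    (h : 32 * L₀ ^ 4 * δ ≤ L₂ ^ 2) :
    2 * L₀ ^ 2 * √δ ≤ L₂ / (2 * √2) := by
  rw [← sq_le_sq₀ (by positivity) (by positivity), div_pow, le_div_iff₀ (by positivity)]
  calc (2 * L₀ ^ 2 * √δ) ^ 2 * (2 * √2) ^ 2 = 32 * L₀ ^ 4 * δ := by
        simp only [mul_pow, sq_sqrt hδ, sq_sqrt zero_le_two]; ring
    _ ≤ L₂ ^ 2 := h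

/-- Key positivity estimate in the uniform moment bound for the tamed scheme. -/
theorem stmt_18 (d : ℕ) (L₂ L₀ ℓ δ : ℝ) (hL₂ : 0 < L₂) (hL₀ : 0 < L₀)
    (hℓ : 0 ≤ ℓ) (hδ : δ ∈ Set.Ioc (0 : ℝ) (L₂ ^ 2 / (32 * L₀ ^ 4)))
    (x : EuclideanSpace ℝ (Fin d)) (hx : 1 ≤ ‖x‖) :
    L₂ / Real.sqrt 2
        + (L₂ / (2 * Real.sqrt 2) - 2 * L₀ ^ 2 * Real.sqrt δ)
          * (1 + ‖x‖ ^ ℓ) * Real.sqrt δ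
      ≤ L₂ * Real.sqrt (1 + δ * ‖x‖ ^ (2 * ℓ)) - 2 * L₀ ^ 2 * (1 + ‖x‖ ^ ℓ) * δ ∧
    0 < L₂ / Real.sqrt 2
        + (L₂ / (2 * Real.sqrt 2) - 2 * L₀ ^ 2 * Real.sqrt δ)
          * (1 + ‖x‖ ^ ℓ) * Real.sqrt δ := by
  obtain ⟨hδ₀, hδ₁⟩ := hδ
  have hr : 1 ≤ ‖x‖ ^ ℓ := one_le_rpow hx hℓ
  have hpow : ‖x‖ ^ (2 * ℓ) = (‖x‖ ^ ℓ) ^ 2 := by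
    rw [mul_comm, ← rpow_natCast, ← rpow_mul (norm_nonneg x), Nat.cast_ofNat]
  have hsmall : 2 * L₀ ^ 2 * √δ ≤ L₂ / (2 * √2) :=
    two_mul_sq_mul_sqrt_le_div hL₂.le hδ₀.le ((le_div_iff₀' (by positivity)).1 hδ₁)
  refine ⟨?_, ?_⟩
  · rw [hpow]
    exact div_sqrt_two_add_le_mul_sqrt_one_add_mul_sq hL₂.le hδ₀.le hr _
  · have hfactor : 0 ≤ (L₂ / (2 * √2) - 2 * L₀ ^ 2 * √δ) * (1 + ‖x‖ ^ ℓ) * √δ :=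
      mul_nonneg (mul_nonneg (sub_nonneg.2 hsmall) (by linarith)) (sqrt_nonneg δ)
    exact add_pos_of_pos_of_nonneg (by positivity) hfactor
end
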